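/- arXiv:2601.05225 — 4 statements merged into one kernel-verified Lean document; each statement's English description precedes it below -/
import Mathlib

section
/- Consider an execution in which successful CAS operations on a single memory location never write a value that was previously stored in that location. If two CAS operations on the location both succeed, then one of them performs its read of the expected value after the other's successful write. -/
private lemma constUp {V : Type} (val : ℕ → V) (write : ℕ → Prop)
    (hstep : ∀ t, ¬ write t → val (t + 1) = val t) :
    ∀ b a, a ≤ b → (∀ t, a ≤ t → t < b → ¬ write t) → val b = val a := by
  intro b
  induction b with
  | zero => intro a ha _; interval_cases a; rfl
  | succ b ih =>
    intro a ha hnw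
    rcases Nat.lt_or_ge a (b+1) with h | h
    · have hab : a ≤ b := Nat.lt_succ_iff.mp h
      have : val (b+1) = val b := hstep b (hnw b hab (Nat.lt_succ_self b))
      rw [this]
      exact ih a hab (fun t hat htb => hnw t hat (Nat.lt_succ_of_lt htb))
    · have : a = b + 1 := le_antisymm ha h
      rw [this]

private lemma nowriteAux {V : Type} (val : ℕ → V) (write : ℕ → Prop)
    (hstep : ∀ t, ¬ write t → val (t + 1) = val t)
    (hfresh : ∀ t, write t → ∀ s, s ≤ t → val (t + 1) ≠ val s) :
    ∀ n b a t, b - t ≤ n → a ≤ t → t < b → val b = val a → write t → False := by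
  intro n
  induction n with
  | zero => intro b a t hbt hat htb _ _; omega
  | succ n ih =>
    intro b a t hbt hat htb heq hw
    by_cases hex : ∃ s, t < s ∧ s < b ∧ write s
    · obtain ⟨s, hts, hsb, hws⟩ := hex
      exact ih b a s (by omega) (by omega) hsb heq hws
    · push_neg at hex
      have hconst : val b = val (t + 1) := by
        apply constUp val write hstep b (t+1) (by omega)
        intro u hu hub
        exact hex u (by omega) hub
      exact hfresh t hw a hat (by rw [← hconst, heq])

/-- Atomic register model: `val t` is the value stored in the register at time
`t`, and `write t` holds iff a (successful CAS) write occurs at time `t`. If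
two CAS operations on the register both succeed, and successful CAS operations
never write a value previously stored in the register (freshness), then one of
them performs its read of the expected value after the other's successful
write. -/
theorem stmt7 {V : Type} (val : ℕ → V) (write : ℕ → Prop)
    -- the register changes only when a write occurs
    (hstep : ∀ t, ¬ write t → val (t + 1) = val t)
    -- freshness: a write never stores a value that was previously stored
    (hfresh : ∀ t, write t → ∀ s, s ≤ t → val (t + 1) ≠ val s)
    -- two CAS operations: each reads at time `rᵢ`, then at time `cᵢ > rᵢ`
    -- performs a CAS that succeeds (the current value equals the value read)
    -- and writes
    (r₁ c₁ r₂ c₂ : ℕ)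
    (h₁ : r₁ < c₁) (h₂ : r₂ < c₂)
    (succ₁ : val c₁ = val r₁) (succ₂ : val c₂ = val r₂)
    (w₁ : write c₁) (w₂ : write c₂)
    (hne : c₁ ≠ c₂) :
    c₁ < r₂ ∨ c₂ < r₁ := by
  have key := nowriteAux val write hstep hfresh
  rcases Nat.lt_or_ge c₁ c₂ with h | h
  · left
    by_contra hc
    push_neg at hc
    exact key (c₂ - c₁) c₂ r₂ c₁ (le_refl _) hc h succ₂ w₁
  · right
    have hlt : c₂ < c₁ := lt_of_le_of_ne h (Ne.symm hne)
    by_contra hc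
    push_neg at hc
    exact key (c₁ - c₂) c₁ r₁ c₂ (le_refl _) hc hlt succ₁ w₂
end

section
/- In the register model with fresh writes, if an operation performs two consecutive failed CAS attempts on a location (each attempt reading the current value and then failing its CAS), then some other operation performed a successful CAS whose read and successful write both occur within the interval from the start of the first failed attempt to the end of the second failed attempt. -/
/-- If the value differs at two times, there is a change step in between. -/
lemma exists_change_aux {V : Type} (val : ℕ → V) :
    ∀ x y, y ≤ x → val x ≠ val y → ∃ t, y ≤ t ∧ t < x ∧ val (t + 1) ≠ val t := by
  intro x
  induction x with
  | zero => intro y hy hne; exact (hne (by rw [Nat.le_zero.mp hy])).elim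
  | succ u ih =>
    intro y hy hne
    by_cases hu : val (u + 1) = val u
    · rcases Nat.lt_or_ge y (u + 1) with h | h
      · obtain ⟨t, ht1, ht2, ht3⟩ := ih y (by omega) (hu ▸ hne)
        exact ⟨t, ht1, by omega, ht3⟩
      · have hy' : y = u + 1 := by omega
        exact (hne (hy' ▸ rfl)).elim
    · rcases Nat.lt_or_ge y (u + 1) with h | h
      · exact ⟨u, by omega, by omega, hu⟩
      · have hy' : y = u + 1 := by omega
        exact (hne (hy' ▸ rfl)).elim


/-- Atomic register model with a family of CAS attempts indexed by `ι`: attempt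
`a` reads the register at time `read a` and at time `cas a > read a` performs a
CAS step that succeeds iff the register still holds the value read. Successful
CAS steps always write fresh (never-before-stored) values, and the register
changes only at successful CAS steps.

If an operation performs two consecutive failed CAS attempts `a₁` and then
`a₂`, then some other attempt `m` performed a successful CAS whose read and
successful write both occur within the interval from the start of the first
failed attempt (`read a₁`) to the end of the second failed attempt
(`cas a₂`). -/
theorem stmt8 {V : Type} {ι : Type} (val : ℕ → V) (read cas : ι → ℕ)
    (hrc : ∀ a, read a < cas a)
    -- the register changes only at successful CAS steps
    (hchange : ∀ t, val (t + 1) ≠ val t →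
      ∃ a, cas a = t ∧ val (cas a) = val (read a))
    -- freshness: a successful CAS never writes a previously stored value
    (hfresh : ∀ a, val (cas a) = val (read a) →
      ∀ s, s ≤ cas a → val (cas a + 1) ≠ val s)
    -- two consecutive failed CAS attempts by one operation
    (a₁ a₂ : ι)
    (hconsec : cas a₁ ≤ read a₂)
    (fail₁ : val (cas a₁) ≠ val (read a₁))
    (fail₂ : val (cas a₂) ≠ val (read a₂)) :
    ∃ m, m ≠ a₁ ∧ m ≠ a₂ ∧
      val (cas m) = val (read m) ∧
      read a₁ ≤ read m ∧ cas m ≤ cas a₂ := by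
  -- Key lemma: after a change at time t₁, the register never again holds a
  -- value stored at a time ≤ t₁ (by freshness).
  have keyA : ∀ x t₁, t₁ < x → val (t₁ + 1) ≠ val t₁ →
      ∀ s, s ≤ t₁ → val x ≠ val s := by
    intro x
    induction x with
    | zero => intro t₁ h; omega
    | succ u ih =>
      intro t₁ ht₁ hchg s hs
      by_cases hu : val (u + 1) = val u
      · have ht₁u : t₁ < u := by
          rcases Nat.lt_or_ge t₁ u with h | h
          · exact h
          · have : t₁ = u := by omega
            exact absurd (this ▸ hu) hchg
        exact hu ▸ ih t₁ ht₁u hchg s hs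
      · obtain ⟨b, hb, hbs⟩ := hchange u hu
        have := hfresh b hbs s (by omega)
        rwa [hb] at this
  -- From the second failure, get a change during [read a₂, cas a₂).
  obtain ⟨t, ht1, ht2, ht3⟩ :=
    exists_change_aux val (cas a₂) (read a₂) (le_of_lt (hrc a₂)) fail₂
  obtain ⟨m, hm, hms⟩ := hchange t ht3
  refine ⟨m, ?_, ?_, hms, ?_, by omega⟩
  · intro h; exact fail₁ (h ▸ hms)
  · intro h; exact fail₂ (h ▸ hms)
  · by_contra hlt
    push_neg at hlt
    -- From the first failure, get a change at some t₁ ∈ [read a₁, cas a₁).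
    obtain ⟨t₁, h1, h2, h3⟩ :=
      exists_change_aux val (cas a₁) (read a₁) (le_of_lt (hrc a₁)) fail₁
    have ht₁m : t₁ < cas m := by omega
    exact keyA (cas m) t₁ ht₁m h3 (read m) (by omega) hms
end

section
/- Suppose a deletion in a leaf-oriented BST replaces an internal node p (whose children are leaf ℓ with key k and subtree sib) with sib. Then the set of keys of non-sentinel leaves of the resulting tree equals the original set minus {k}, and the resulting tree still satisfies the leaf-oriented BST routing property. -/
/-- A leaf-oriented BST whose leaves are sentinel or non-sentinel; internal
nodes carry a routing key. -/
inductive LTree (K : Type) where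
  | leaf (key : K) (sentinel : Bool)
  | node (key : K) (l r : LTree K)

namespace LTree

variable {K : Type} [LinearOrder K]

def leafKeys : LTree K → List K
  | leaf k _ => [k]
  | node _ l r => leafKeys l ++ leafKeys r

/-- The keys of the non-sentinel leaves. -/
def nsLeafKeys : LTree K → List K
  | leaf k sentinel => if sentinel then [] else [k]
  | node _ l r => nsLeafKeys l ++ nsLeafKeys r

/-- The leaf-oriented BST routing property: leaves in a node `x`'s left subtree
have keys `< x.key` and leaves of the right subtree have keys `≥ x.key`. -/
def Routed : LTree K → Prop
  | leaf _ _ => True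
  | node key l r =>
      (∀ x ∈ leafKeys l, x < key) ∧ (∀ x ∈ leafKeys r, key ≤ x) ∧
        Routed l ∧ Routed r

/-- `Repl p s t t'`: `t'` is obtained from `t` by replacing, in place, (an
occurrence of) the subtree rooted at `p` by the subtree `s`. -/
inductive Repl (p s : LTree K) : LTree K → LTree K → Prop
  | here : Repl p s p s
  | left {key : K} {l l' r : LTree K} :
      Repl p s l l' → Repl p s (node key l r) (node key l' r)
  | right {key : K} {l r r' : LTree K} :
      Repl p s r r' → Repl p s (node key l r) (node key l r')

end LTree

namespace LTree

variable {K : Type} [LinearOrder K]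

lemma repl_ns_sub {p s t t' : LTree K} (h : Repl p s t t') :
    ∀ x ∈ nsLeafKeys p, x ∈ nsLeafKeys t := by
  induction h with
  | here => intro x hx; exact hx
  | left _ ih => intro x hx; simp only [nsLeafKeys, List.mem_append]; exact Or.inl (ih x hx)
  | right _ ih => intro x hx; simp only [nsLeafKeys, List.mem_append]; exact Or.inr (ih x hx)

lemma repl_ns_nodup {p s t t' : LTree K} (h : Repl p s t t')
    (hd : (nsLeafKeys t).Nodup) : (nsLeafKeys p).Nodup := by
  induction h with
  | here => exact hd
  | left _ ih => exact ih (List.Nodup.of_append_left hd)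
  | right _ ih => exact ih (List.Nodup.of_append_right hd)

lemma repl_leaf_sub {p s t t' : LTree K} (h : Repl p s t t')
    (hs : ∀ x ∈ leafKeys s, x ∈ leafKeys p) :
    ∀ x ∈ leafKeys t', x ∈ leafKeys t := by
  induction h with
  | here => exact hs
  | left _ ih =>
      intro x hx; simp only [leafKeys, List.mem_append] at hx ⊢
      exact hx.imp (ih x) id
  | right _ ih =>
      intro x hx; simp only [leafKeys, List.mem_append] at hx ⊢
      exact hx.imp id (ih x)

lemma repl_routed {p s t t' : LTree K} (h : Repl p s t t')
    (hs : ∀ x ∈ leafKeys s, x ∈ leafKeys p)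
    (hrs : Routed p → Routed s) (ht : Routed t) : Routed t' := by
  induction h with
  | here => exact hrs ht
  | left hr ih =>
      obtain ⟨h1, h2, h3, h4⟩ := ht
      exact ⟨fun x hx => h1 x (repl_leaf_sub hr hs x hx), h2, ih h3, h4⟩
  | right hr ih =>
      obtain ⟨h1, h2, h3, h4⟩ := ht
      exact ⟨h1, fun x hx => h2 x (repl_leaf_sub hr hs x hx), h3, ih h4⟩

lemma repl_ns_finset {p s t t' : LTree K} {k : K} (h : Repl p s t t')
    (hd : (nsLeafKeys t).Nodup) (hk : k ∈ nsLeafKeys p)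
    (hbase : (nsLeafKeys s).toFinset = (nsLeafKeys p).toFinset.erase k) :
    (nsLeafKeys t').toFinset = (nsLeafKeys t).toFinset.erase k := by
  induction h with
  | here => exact hbase
  | @left key l l' r hr ih =>
      have hkl : k ∈ nsLeafKeys l := repl_ns_sub hr k hk
      have hkr : k ∉ nsLeafKeys r :=
        fun hkr => (List.disjoint_of_nodup_append hd) hkl hkr
      simp only [nsLeafKeys, List.toFinset_append]
      rw [Finset.erase_union_distrib,
        Finset.erase_eq_of_notMem (show k ∉ (nsLeafKeys r).toFinset by simpa using hkr),
        ih (List.Nodup.of_append_left hd)]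
  | @right key l r r' hr ih =>
      have hkr : k ∈ nsLeafKeys r := repl_ns_sub hr k hk
      have hkl : k ∉ nsLeafKeys l :=
        fun hkl => (List.disjoint_of_nodup_append hd) hkl hkr
      simp only [nsLeafKeys, List.toFinset_append]
      rw [Finset.erase_union_distrib,
        Finset.erase_eq_of_notMem (show k ∉ (nsLeafKeys l).toFinset by simpa using hkl),
        ih (List.Nodup.of_append_right hd)]

end LTree


/-- Suppose a deletion in a leaf-oriented BST replaces an internal node `p`
(whose children are the non-sentinel leaf `ℓ` with key `k` and the subtree
`sib`) with `sib`. Then the set of keys of non-sentinel leaves of the resulting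
tree equals the original set minus `{k}`, and the resulting tree still
satisfies the leaf-oriented BST routing property. -/
theorem stmt13 {K : Type} [LinearOrder K] (t t' p sib : LTree K) (kp k : K)
    (hroute : LTree.Routed t) (hdist : (LTree.nsLeafKeys t).Nodup)
    (hp : p = LTree.node kp (LTree.leaf k false) sib ∨
          p = LTree.node kp sib (LTree.leaf k false))
    (hrepl : LTree.Repl p sib t t') :
    (LTree.nsLeafKeys t').toFinset = (LTree.nsLeafKeys t).toFinset.erase k ∧
      LTree.Routed t' := by
  have hsubl : ∀ x ∈ LTree.leafKeys sib, x ∈ LTree.leafKeys p := by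
    rcases hp with rfl | rfl <;> simp only [LTree.leafKeys, List.mem_append] <;>
      exact fun x hx => by simp [hx]
  have hrs : LTree.Routed p → LTree.Routed sib := by
    rcases hp with rfl | rfl
    · exact fun h => h.2.2.2
    · exact fun h => h.2.2.1
  have hk : k ∈ LTree.nsLeafKeys p := by
    rcases hp with rfl | rfl <;> simp [LTree.nsLeafKeys]
  have hdp := LTree.repl_ns_nodup hrepl hdist
  have hbase : (LTree.nsLeafKeys sib).toFinset =
      (LTree.nsLeafKeys p).toFinset.erase k := by
    rcases hp with rfl | rfl
    · simp only [LTree.nsLeafKeys, if_neg (Bool.false_ne_true),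
        List.toFinset_append] at hdp ⊢
      have : k ∉ LTree.nsLeafKeys sib := by
        simpa using fun h => (List.disjoint_of_nodup_append hdp (by simp) h)
      simp [Finset.erase_union_distrib, Finset.erase_eq_of_notMem, this]
    · simp only [LTree.nsLeafKeys, if_neg (Bool.false_ne_true),
        List.toFinset_append] at hdp ⊢
      have : k ∉ LTree.nsLeafKeys sib := by
        simpa using fun h => (List.disjoint_of_nodup_append hdp h (by simp))
      simp [Finset.erase_union_distrib, Finset.erase_eq_of_notMem, this]
  exact ⟨LTree.repl_ns_finset hrepl hdist hk hbase,
    LTree.repl_routed hrepl hsubl hrs hroute⟩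
end

section
/- Suppose an insertion in a leaf-oriented BST replaces a leaf ℓ with key k' by an internal node new with key max(k, k') whose two leaf children hold keys min(k, k') and max(k, k') (the smaller on the left), where k ≠ k'. Then the resulting tree satisfies the BST routing property and its set of non-sentinel leaf keys is the original set together with k. -/
namespace LTree

variable {K : Type} [LinearOrder K]

/-- `Ins k t t'`: `t'` is obtained from `t` by following the standard BST
search path for `k` (left if `k` is less than the node's key, right otherwise)
down to a non-sentinel leaf `ℓ` with some key `k' ≠ k`, and replacing `ℓ` by an
internal node with key `max k k'` whose two (non-sentinel) leaf children hold
keys `min k k'` and `max k k'`, the smaller on the left. -/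
inductive Ins (k : K) : LTree K → LTree K → Prop
  | here (k' : K) : k ≠ k' →
      Ins k (leaf k' false)
        (node (max k k') (leaf (min k k') false) (leaf (max k k') false))
  | left {key : K} {l l' r : LTree K} :
      k < key → Ins k l l' → Ins k (node key l r) (node key l' r)
  | right {key : K} {l r r' : LTree K} :
      ¬ k < key → Ins k r r' → Ins k (node key l r) (node key l r')

end LTree


lemma LTree.ins_leafKeys {K : Type} [LinearOrder K] {t t' : LTree K} {k : K}
    (hins : LTree.Ins k t t') :
    ∀ x ∈ LTree.leafKeys t', x = k ∨ x ∈ LTree.leafKeys t := by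
  induction hins with
  | here k' h =>
      intro x hx
      simp [LTree.leafKeys] at hx ⊢
      rcases le_total k k' with hle | hle <;>
        simp [max_eq_right, max_eq_left, min_eq_left, min_eq_right, hle] at hx <;> tauto
  | left hlt hins ih =>
      intro x hx
      simp [LTree.leafKeys] at hx ⊢
      rcases hx with hx | hx
      · rcases ih x hx with h | h <;> tauto
      · tauto
  | right hlt hins ih =>
      intro x hx
      simp [LTree.leafKeys] at hx ⊢
      rcases hx with hx | hx
      · tauto
      · rcases ih x hx with h | h <;> tauto

/-- Suppose an insertion in a leaf-oriented BST replaces the leaf `ℓ` (with key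
`k' ≠ k`) reached by the BST search for `k` by an internal node with key
`max k k'` whose two leaf children hold keys `min k k'` and `max k k'`, the
smaller on the left. Then the resulting tree satisfies the BST routing
property, and its set of non-sentinel leaf keys is the original set together
with `k`. -/
theorem stmt14 {K : Type} [LinearOrder K] (t t' : LTree K) (k : K)
    (hroute : LTree.Routed t) (hdist : (LTree.nsLeafKeys t).Nodup)
    (hins : LTree.Ins k t t') :
    LTree.Routed t' ∧
      (LTree.nsLeafKeys t').toFinset = insert k (LTree.nsLeafKeys t).toFinset := by
  induction hins with
  | here k' hne =>
      constructor
      · refine ⟨?_, ?_, trivial, trivial⟩ <;> intro x hx <;>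
          simp [LTree.leafKeys] at hx <;> subst hx
        · exact min_lt_max.mpr hne
        · exact le_refl _
      · simp [LTree.nsLeafKeys]
        ext x
        simp [Finset.mem_insert]
        rcases le_total k k' with h | h <;>
          simp [min_eq_left, min_eq_right, max_eq_left, max_eq_right, h] <;> tauto
  | @left key l l' r hlt hins ih =>
      obtain ⟨h1, h2, hl, hr⟩ := hroute
      simp [LTree.nsLeafKeys, List.nodup_append] at hdist
      obtain ⟨hroute', hset⟩ := ih hl hdist.1
      refine ⟨⟨?_, h2, hroute', hr⟩, ?_⟩
      · intro x hx
        rcases LTree.ins_leafKeys hins x hx with h | h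
        · subst h; exact hlt
        · exact h1 x h
      · simp [LTree.nsLeafKeys, hset]
  | @right key l r r' hlt hins ih =>
      obtain ⟨h1, h2, hl, hr⟩ := hroute
      simp [LTree.nsLeafKeys, List.nodup_append] at hdist
      obtain ⟨hroute', hset⟩ := ih hr hdist.2.1
      refine ⟨⟨h1, ?_, hl, hroute'⟩, ?_⟩
      · intro x hx
        rcases LTree.ins_leafKeys hins x hx with h | h
        · subst h; exact le_of_not_gt hlt
        · exact h2 x h
      · simp [LTree.nsLeafKeys, hset]
end
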